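/- arXiv:1912.09243 — 3 statements merged into one kernel-verified Lean document; each statement's English description precedes it below -/
import Mathlib

section
/- Let V be a complex representation of S_n that is multiplicity-free (each irreducible representation of S_n occurs at most once in V). Then every vector belonging to a one-dimensional Gelfand-Tsetlin subspace of V (an intersection of isotypic components for the chain S_1 ⊂ S_2 ⊂ ... ⊂ S_n) is a simultaneous eigenvector of all the Jucys-Murphy operators J_1, ..., J_n acting on V. -/
open Finset

/-- A submodule is invariant under the restriction of `ρ` to the subgroup `H`. -/
def RepInvariant {G : Type*} [Group G] {V : Type*} [AddCommGroup V] [Module ℂ V]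
    (ρ : Representation ℂ G V) (H : Subgroup G) (p : Submodule ℂ V) : Prop :=
  ∀ g ∈ H, ∀ v ∈ p, ρ g v ∈ p

/-- A nonzero `H`-invariant submodule with no proper nonzero invariant submodule:
an irreducible subrepresentation of the restriction of `ρ` to `H`. -/
def IsSimpleSubrep {G : Type*} [Group G] {V : Type*} [AddCommGroup V] [Module ℂ V]
    (ρ : Representation ℂ G V) (H : Subgroup G) (p : Submodule ℂ V) : Prop :=
  RepInvariant ρ H p ∧ p ≠ ⊥ ∧
    ∀ q : Submodule ℂ V, RepInvariant ρ H q → q ≤ p → q = ⊥ ∨ q = p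

/-- Two submodules are isomorphic as representations of `H`. -/
def SubrepIso {G : Type*} [Group G] {V : Type*} [AddCommGroup V] [Module ℂ V]
    (ρ : Representation ℂ G V) (H : Subgroup G) (p q : Submodule ℂ V) : Prop :=
  ∃ e : p ≃ₗ[ℂ] q, ∀ g ∈ H, ∀ v w : p, (w : V) = ρ g v → ((e w : V) = ρ g (e v))

/-- `W` is an isotypic component of `V` under the restriction of `ρ` to `H`:
the sum of all irreducible subrepresentations isomorphic to some fixed irreducible. -/
def IsIsotypicComponent {G : Type*} [Group G] {V : Type*} [AddCommGroup V] [Module ℂ V]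
    (ρ : Representation ℂ G V) (H : Subgroup G) (W : Submodule ℂ V) : Prop :=
  ∃ p, IsSimpleSubrep ρ H p ∧
    W = sSup {q | IsSimpleSubrep ρ H q ∧ SubrepIso ρ H p q}

/-- The subgroup `S_i ⊆ S_n` of permutations fixing every point with (0-based)
index `≥ i`. -/
def fixSub (n i : ℕ) : Subgroup (Equiv.Perm (Fin n)) where
  carrier := {σ | ∀ x : Fin n, i ≤ (x : ℕ) → σ x = x}
  one_mem' := fun _ _ => rfl
  mul_mem' := by
    intro a b ha hb x hx
    have h1 := hb x hx
    have h2 := ha x hx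
    simp only [Set.mem_setOf_eq] at *
    calc (a * b) x = a (b x) := rfl
      _ = a x := by rw [h1]
      _ = x := h2
  inv_mem' := by
    intro a ha x hx
    have h := ha x hx
    simp only [Set.mem_setOf_eq] at *
    calc a⁻¹ x = a⁻¹ (a x) := by rw [h]
      _ = x := by simp

/-!
`J_i` lies in `ℂ[S_i]` and commutes with `S_{i-1}`. So for `j ≥ i` it preserves every
`S_j`-invariant subspace, and for `j < i` it is an `S_j`-intertwiner of `V`. An intertwiner sends
each irreducible summand of an isotypic component to zero or to an isomorphic irreducible (Schur),
hence preserves the isotypic component. Either way `J_i` preserves the Gelfand-Tsetlin subspace,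
and on a line it acts by a scalar.
-/

section Intertwiner

variable {G V : Type*} [Group G] [AddCommGroup V] [Module ℂ V]

def IsIntertwiner (ρ : Representation ℂ G V) (H : Subgroup G) (f : V →ₗ[ℂ] V) : Prop :=
  ∀ g ∈ H, ∀ v : V, f (ρ g v) = ρ g (f v)

variable {ρ : Representation ℂ G V} {H : Subgroup G} {f : V →ₗ[ℂ] V} {p q : Submodule ℂ V}

theorem SubrepIso.trans {r : Submodule ℂ V} (hpq : SubrepIso ρ H p q)
    (hqr : SubrepIso ρ H q r) : SubrepIso ρ H p r := by
  obtain ⟨e₁, he₁⟩ := hpq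
  obtain ⟨e₂, he₂⟩ := hqr
  exact ⟨e₁.trans e₂, fun g hg v w hw => he₂ g hg (e₁ v) (e₁ w) (he₁ g hg v w hw)⟩

theorem RepInvariant.inf (hp : RepInvariant ρ H p) (hq : RepInvariant ρ H q) :
    RepInvariant ρ H (p ⊓ q) :=
  fun g hg v hv => ⟨hp g hg v hv.1, hq g hg v hv.2⟩

theorem RepInvariant.map (hp : RepInvariant ρ H p) (hf : IsIntertwiner ρ H f) :
    RepInvariant ρ H (p.map f) := by
  rintro g hg _ ⟨v, hv, rfl⟩
  exact ⟨ρ g v, hp g hg v hv, hf g hg v⟩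

theorem RepInvariant.comap (hp : RepInvariant ρ H p) (hf : IsIntertwiner ρ H f) :
    RepInvariant ρ H (p.comap f) := by
  intro g hg v hv
  rw [Submodule.mem_comap, hf g hg v]
  exact hp g hg (f v) hv

theorem IsIntertwiner.repInvariant_ker (hf : IsIntertwiner ρ H f) :
    RepInvariant ρ H (LinearMap.ker f) := by
  intro g hg v hv
  rw [LinearMap.mem_ker, hf g hg v, LinearMap.mem_ker.mp hv, map_zero]

theorem IsSimpleSubrep.map_of_disjoint_ker (hq : IsSimpleSubrep ρ H q) (hf : IsIntertwiner ρ H f)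
    (hker : Disjoint q (LinearMap.ker f)) :
    IsSimpleSubrep ρ H (q.map f) ∧ SubrepIso ρ H q (q.map f) := by
  obtain ⟨hinv, hne, hmin⟩ := hq
  refine ⟨⟨hinv.map hf, ?_, fun r hr hrq => ?_⟩, ?_⟩
  · exact fun h => hne (disjoint_self.mp (hker.mono_right (LinearMap.le_ker_iff_map.mpr h)))
  · have hmap : (q ⊓ r.comap f).map f = r := by
      refine le_antisymm ((Submodule.map_mono inf_le_right).trans (Submodule.map_comap_le f r)) ?_
      intro x hx
      obtain ⟨v, hv, rfl⟩ := hrq hx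
      exact ⟨v, ⟨hv, hx⟩, rfl⟩
    rcases hmin _ (hinv.inf (hr.comap hf)) inf_le_left with h | h
    · left; rw [← hmap, h, Submodule.map_bot]
    · right; rw [← hmap, h]
  · have hinj : Function.Injective (f ∘ₗ q.subtype) :=
      LinearMap.ker_eq_bot.mp <| LinearMap.ker_eq_bot'.mpr fun x hx =>
        Subtype.ext (LinearMap.disjoint_ker.mp hker x x.2 hx)
    have hrange : LinearMap.range (f ∘ₗ q.subtype) = q.map f := by
      rw [LinearMap.range_comp, Submodule.range_subtype]
    refine ⟨(LinearEquiv.ofInjective _ hinj).trans (LinearEquiv.ofEq _ _ hrange),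
      fun g hg v w hw => ?_⟩
    change f w = ρ g (f v)
    rw [hw, hf g hg]

theorem IsSimpleSubrep.map_eq_bot_or (hq : IsSimpleSubrep ρ H q) (hf : IsIntertwiner ρ H f) :
    q.map f = ⊥ ∨ IsSimpleSubrep ρ H (q.map f) ∧ SubrepIso ρ H q (q.map f) := by
  rcases hq.2.2 _ (hq.1.inf hf.repInvariant_ker) inf_le_left with h | h
  · exact .inr (hq.map_of_disjoint_ker hf (disjoint_iff.mpr h))
  · exact .inl (LinearMap.le_ker_iff_map.mp (inf_eq_left.mp h))

theorem IsIsotypicComponent.repInvariant (hp : IsIsotypicComponent ρ H p) :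
    RepInvariant ρ H p := by
  obtain ⟨p₀, -, rfl⟩ := hp
  intro g hg v hv
  have hle : sSup {q | IsSimpleSubrep ρ H q ∧ SubrepIso ρ H p₀ q} ≤
      (sSup {q | IsSimpleSubrep ρ H q ∧ SubrepIso ρ H p₀ q}).comap (ρ g) :=
    sSup_le fun q hq w hw => le_sSup hq (hq.1.1 g hg w hw)
  exact hle hv

theorem IsIsotypicComponent.map_le (hp : IsIsotypicComponent ρ H p) (hf : IsIntertwiner ρ H f) :
    p.map f ≤ p := by
  obtain ⟨p₀, -, rfl⟩ := hp
  rw [sSup_eq_iSup', Submodule.map_iSup]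
  refine iSup_le fun ⟨q, hq, hiso⟩ => ?_
  rcases hq.map_eq_bot_or hf with h | ⟨hs, hi⟩
  · exact h ▸ bot_le
  · exact le_iSup_of_le ⟨q.map f, hs, hiso.trans hi⟩ le_rfl

end Intertwiner

theorem exists_smul_eq_of_mapsTo_of_finrank_eq_one {K V : Type*} [Field K] [AddCommGroup V]
    [Module K V] {U : Submodule K V} (hU : Module.finrank K U = 1) {f : V →ₗ[K] V}
    (hf : Set.MapsTo f U U) {b : V} (hb : b ∈ U) : ∃ c : K, f b = c • b := by
  obtain ⟨c, hc, -⟩ := (f.restrict hf).existsUnique_eq_smul_id_of_finrank_eq_one hU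
  exact ⟨c, congrArg Subtype.val (LinearMap.congr_fun hc ⟨b, hb⟩)⟩

section JucysMurphy

variable {n : ℕ} {V : Type*} [AddCommGroup V] [Module ℂ V]
  {ρ : Representation ℂ (Equiv.Perm (Fin n)) V}

/-- With 0-based indices, `jucysMurphy ρ i` is the action of `J_{i+1}`. -/
def jucysMurphy (ρ : Representation ℂ (Equiv.Perm (Fin n)) V) (i : Fin n) : V →ₗ[ℂ] V :=
  ∑ l ∈ Finset.univ.filter (fun l => l < i), ρ (Equiv.swap l i)

theorem swap_mem_fixSub {i l : Fin n} {j : ℕ} (hl : l < i) (hij : (i : ℕ) < j) :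
    Equiv.swap l i ∈ fixSub n j := by
  intro x hx
  have : (l : ℕ) < i := hl
  exact Equiv.swap_apply_of_ne_of_ne (Fin.ne_of_val_ne (by omega)) (Fin.ne_of_val_ne (by omega))

theorem apply_lt_iff_of_mem_fixSub {j : ℕ} {g : Equiv.Perm (Fin n)} (hg : g ∈ fixSub n j)
    {i : Fin n} (hji : j ≤ (i : ℕ)) (l : Fin n) : g l < i ↔ l < i := by
  by_cases hl : j ≤ (l : ℕ)
  · rw [hg l hl]
  · have hgl : ((g l : Fin n) : ℕ) < j := by
      by_contra! h
      have hfix : g l = l := g.injective (hg (g l) h)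
      rw [hfix] at h
      omega
    simp only [Fin.lt_def]
    omega

theorem jucysMurphy_isIntertwiner (i : Fin n) {j : ℕ} (hji : j ≤ (i : ℕ)) :
    IsIntertwiner ρ (fixSub n j) (jucysMurphy ρ i) := by
  intro g hg v
  have hconj : ∀ l, g * Equiv.swap l i = Equiv.swap (g l) i * g := fun l => by
    rw [Equiv.mul_swap_eq_swap_mul, hg i hji]
  simp only [jucysMurphy, LinearMap.sum_apply, map_sum, ← Module.End.mul_apply, ← map_mul, hconj]
  exact (Finset.sum_equiv g (by simp [apply_lt_iff_of_mem_fixSub hg hji]) fun _ _ => rfl).symm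

theorem RepInvariant.jucysMurphy_mem {p : Submodule ℂ V} {i : Fin n} {j : ℕ}
    (hp : RepInvariant ρ (fixSub n j) p) (hij : (i : ℕ) < j) {v : V} (hv : v ∈ p) :
    jucysMurphy ρ i v ∈ p := by
  rw [jucysMurphy, LinearMap.sum_apply]
  exact Submodule.sum_mem _ fun l hl => hp _ (swap_mem_fixSub (Finset.mem_filter.mp hl).2 hij) v hv

theorem IsIsotypicComponent.jucysMurphy_mem {W : Submodule ℂ V} {j : ℕ}
    (hW : IsIsotypicComponent ρ (fixSub n j) W) (i : Fin n) {v : V} (hv : v ∈ W) :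
    jucysMurphy ρ i v ∈ W := by
  rcases lt_or_ge (i : ℕ) j with hij | hji
  · exact hW.repInvariant.jucysMurphy_mem hij hv
  · exact hW.map_le (jucysMurphy_isIntertwiner i hji) ⟨v, hv, rfl⟩

end JucysMurphy

theorem gt_vector_eigenvector_of_jucys_murphy_general
    {n : ℕ} {V : Type*} [AddCommGroup V] [Module ℂ V]
    (ρ : Representation ℂ (Equiv.Perm (Fin n)) V)
    (W : Fin n → Submodule ℂ V)
    (hW : ∀ i : Fin n, IsIsotypicComponent ρ (fixSub n ((i : ℕ) + 1)) (W i))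
    (hdim : Module.finrank ℂ ↥(⨅ i, W i) = 1)
    (b : V) (hb : b ∈ ⨅ i, W i) :
    ∀ i : Fin n, ∃ c : ℂ,
      (∑ l ∈ Finset.univ.filter (fun l => l < i), ρ (Equiv.swap l i)) b = c • b := by
  intro i
  have hmaps : Set.MapsTo (jucysMurphy ρ i) ↑(⨅ j, W j) ↑(⨅ j, W j) := fun v hv =>
    (Submodule.mem_iInf _).mpr fun j => (hW j).jucysMurphy_mem i ((Submodule.mem_iInf _).mp hv j)
  exact exists_smul_eq_of_mapsTo_of_finrank_eq_one (f := jucysMurphy ρ i) hdim hmaps hb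

/-- Let `V` be a multiplicity-free complex representation of `S_n` (any two isomorphic
irreducible subrepresentations coincide).  Every vector of a one-dimensional
Gelfand-Tsetlin subspace of `V` — an intersection `⨅ i, W i` where `W i` is an isotypic
component of `V` as a representation of the subgroup `S_{i+1}` of the chain
`S_1 ⊂ ⋯ ⊂ S_n` — is a simultaneous eigenvector of all the Jucys-Murphy operators
`J_1, …, J_n` acting on `V`. -/
theorem gt_vector_eigenvector_of_jucys_murphy
    {n : ℕ} {V : Type*} [AddCommGroup V] [Module ℂ V]
    (ρ : Representation ℂ (Equiv.Perm (Fin n)) V)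
    (hmf : ∀ p q : Submodule ℂ V, IsSimpleSubrep ρ ⊤ p → IsSimpleSubrep ρ ⊤ q →
      SubrepIso ρ ⊤ p q → p = q)
    (W : Fin n → Submodule ℂ V)
    (hW : ∀ i : Fin n, IsIsotypicComponent ρ (fixSub n ((i : ℕ) + 1)) (W i))
    (hdim : Module.finrank ℂ ↥(⨅ i, W i) = 1)
    (b : V) (hb : b ∈ ⨅ i, W i) :
    ∀ i : Fin n, ∃ c : ℂ,
      (∑ l ∈ Finset.univ.filter (fun l => l < i), ρ (Equiv.swap l i)) b = c • b :=
  gt_vector_eigenvector_of_jucys_murphy_general ρ W hW hdim b hb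
end

section
/- In the setting of the function space ℱ on the Johnson graph J(n,k): for any standard Young tableau λ_1 ↗ ... ↗ λ_{i−1} (1 ≤ i ≤ n) and any suffix word c_{i+1}...c_n over {1,2}, the subspace ℱ_{λ_1...λ_{i−1}}^{c_{i+1}...c_n} has dimension at most 2. -/
open Finset

noncomputable section

/-- Words of length `n` over the alphabet `{1,2}` with exactly `k` letters `1`
(`true` = letter `1`), encoding the `k`-subsets of `{1,…,n}`. -/
abbrev JWord (n k : ℕ) : Type :=
  {w : Fin n → Bool // (Finset.univ.filter (fun i => w i = true)).card = k}

/-- The space `ℱ` of complex functions on the Johnson graph `J(n,k)`. -/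
abbrev JFun (n k : ℕ) : Type := JWord n k → ℂ

/-- The action of a permutation on words: `(σ • w) i = w (σ⁻¹ i)`. -/
def permAct {n k : ℕ} (σ : Equiv.Perm (Fin n)) (w : JWord n k) : JWord n k :=
  ⟨fun i => w.1 (σ⁻¹ i), by
    have h : (Finset.univ.filter (fun i => w.1 (σ⁻¹ i) = true)).card
        = (Finset.univ.filter (fun i => w.1 i = true)).card :=
      Finset.card_equiv σ⁻¹ (by intro i; simp)
    exact h.trans w.2⟩

/-- The action of `σ ∈ S_n` on the function space: `(σ f)(x) = f(σ⁻¹ • x)`. -/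
def permOp {n k : ℕ} (σ : Equiv.Perm (Fin n)) : JFun n k →ₗ[ℂ] JFun n k :=
  LinearMap.funLeft ℂ ℂ (permAct σ⁻¹)

/-- The Jucys-Murphy operator `J_{t+1}` (0-based index `t`) acting on the function
space: the sum of the operators of the transpositions `(l, t)`, `l < t`. -/
def JOp (n k : ℕ) (t : Fin n) : JFun n k →ₗ[ℂ] JFun n k :=
  ∑ l ∈ Finset.univ.filter (fun l => l < t), permOp (Equiv.swap l t)

/-- The delta function at a word. -/
def delta {n k : ℕ} (w : JWord n k) : JFun n k := fun x => if x = w then 1 else 0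

/-- `ℱ^{c_q…c_n}`: the span of the delta functions of the words whose letters at the
1-based positions `q, …, n` agree with `c`. -/
def suffixSpace (n k q : ℕ) (c : Fin n → Bool) : Submodule ℂ (JFun n k) :=
  Submodule.span ℂ
    {f | ∃ w : JWord n k, (∀ i : Fin n, q ≤ (i : ℕ) + 1 → w.1 i = c i) ∧ f = delta w}

/-- The content of the box added when passing from the Young diagram `μ` to `ν`. -/
def boxContent (μ ν : YoungDiagram) : ℤ := ∑ x ∈ ν.cells \ μ.cells, ((x.2 : ℤ) - (x.1 : ℤ))

/-- A chain `∅ = μ_0 ↗ μ_1 ↗ ⋯ ↗ μ_p` of Young diagrams, i.e. a standard Young tableau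
with `p` boxes. -/
def IsChainSYT (p : ℕ) (μ : Fin (p + 1) → YoungDiagram) : Prop :=
  (μ 0).cells = ∅ ∧
    ∀ j : Fin p, μ j.castSucc ≤ μ j.succ ∧ (μ j.succ).cells.card = (j : ℕ) + 1

/-- `ℱ_{λ_1…λ_p}`: the Gelfand-Tsetlin subspace of the chain `μ`, the simultaneous
eigenspace of the Jucys-Murphy operators `J_1, …, J_p` with eigenvalues the contents of
the successively added boxes. -/
def gtSpace (n k p : ℕ) (hp : p ≤ n) (μ : Fin (p + 1) → YoungDiagram) :
    Submodule ℂ (JFun n k) :=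
  ⨅ j : Fin p,
    Module.End.eigenspace (JOp n k ⟨(j : ℕ), lt_of_lt_of_le j.2 hp⟩)
      ((boxContent (μ j.castSucc) (μ j.succ) : ℤ) : ℂ)

/-- The inner product on `ℱ` making the delta functions orthonormal. -/
def innerF {n k : ℕ} (f g : JFun n k) : ℂ := ∑ x, (starRingEnd ℂ) (f x) * g x

/-!
Splitting a function according to its letter at position `i` puts the space inside the sum of
the two spaces `ℱ_{λ_1…λ_{i-1}}^{b c_{i+1}…c_n}`, so it suffices that these have dimension at
most `1`. This holds for arbitrary prescribed eigenvalues of `J_1, …, J_{i-1}`, by induction.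

In the inductive step (suffix fixed after position `i`, eigenvalues prescribed for `J_1, …, J_i`)
choose the letter `o` that is in the minority before position `i` on the words having `o` at
position `i`; one letter qualifies, because the words with `2` at position `i` have one more `1`
before it than those with `1` there. Projecting onto the words with `!o` at position `i` is then
injective: a function `f` in the kernel lives on words with `o` at position `i`, and the eigenvalue
equation for `J_i` at the words with `!o` there says that the operator `U` replacing one letter `o`
before position `i` by `!o` kills `f`. For the reverse operator `D`, `DU - UD = #!o - #o` is
positive on the support of `f`, so `0 = ‖U f‖² = ‖D f‖² + ∑ (#!o - #o) |f|²` forces `f = 0`.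
-/

lemma Submodule.finrank_le_finrank_of_injOn {K V W : Type*} [DivisionRing K] [AddCommGroup V]
    [Module K V] [AddCommGroup W] [Module K W] (φ : V →ₗ[K] W) {p : Submodule K V}
    {q : Submodule K W} [FiniteDimensional K q] (hmaps : ∀ x ∈ p, φ x ∈ q)
    (hinj : ∀ x ∈ p, φ x = 0 → x = 0) : Module.finrank K p ≤ Module.finrank K q :=
  LinearMap.finrank_le_finrank_of_injective (f := φ.restrict hmaps) <|
    (injective_iff_map_eq_zero _).2 fun x hx => Subtype.ext (hinj x x.2 (congrArg Subtype.val hx))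

namespace BoolCube

open Function

variable {ι : Type*} [DecidableEq ι] (S : Finset ι)

def flipSum (o : Bool) (f : (ι → Bool) → ℂ) (u : ι → Bool) : ℂ :=
  ∑ l ∈ S with u l = o, f (update u l !o)

def flipAt (l : ι) : Equiv.Perm (ι → Bool) :=
  Involutive.toPerm (fun u => update u l !(u l)) fun u => by simp

lemma flipAt_apply (l : ι) (u : ι → Bool) : flipAt l u = update u l !(u l) := rfl

lemma sum_conj_mul_flipSum [Fintype ι] (o : Bool) (g h : (ι → Bool) → ℂ) :
    ∑ u, starRingEnd ℂ (flipSum S o g u) * h u =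
      ∑ u, starRingEnd ℂ (g u) * flipSum S (!o) h u := by
  simp only [flipSum, map_sum, sum_mul, mul_sum, sum_filter]
  rw [sum_comm, sum_comm (s := univ)]
  refine sum_congr rfl fun l _ => Fintype.sum_equiv (flipAt l) _ _ fun u => ?_
  by_cases hu : u l = o
  · subst hu; simp [flipAt_apply]
  · simp [flipAt_apply, hu]

lemma flipSum_update (o : Bool) (f : (ι → Bool) → ℂ) {u : ι → Bool} {l : ι} (hl : l ∈ S)
    (hul : u l = !o) :
    flipSum S o f (update u l o) =
      f u + ∑ l' ∈ S with u l' = o, f (update (update u l o) l' !o) := by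
  have hfilter : {l' ∈ S | update u l o l' = o} = insert l {l' ∈ S | u l' = o} := by
    ext l'
    rcases eq_or_ne l' l with rfl | hne <;> simp [*]
  have hnotMem : l ∉ {l' ∈ S | u l' = o} := by simp [hul]
  rw [flipSum, hfilter, sum_insert hnotMem, update_idem, ← hul, update_eq_self]

lemma flipSum_not_flipSum (o : Bool) (f : (ι → Bool) → ℂ) (u : ι → Bool) :
    flipSum S (!o) (flipSum S o f) u = flipSum S o (flipSum S (!o) f) u +
      ((#{l ∈ S | u l = !o} : ℂ) - #{l ∈ S | u l = o}) * f u := by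
  have hdown : ∀ l ∈ S.filter (u · = !o), flipSum S o f (update u l !!o) =
      f u + ∑ l' ∈ S with u l' = o, f (update (update u l o) l' !o) := fun l hl => by
    rw [mem_filter] at hl
    rw [Bool.not_not, flipSum_update S o f hl.1 hl.2]
  have hup : ∀ l' ∈ S.filter (u · = o), flipSum S (!o) f (update u l' !o) =
      f u + ∑ l ∈ S with u l = !o, f (update (update u l' !o) l o) := fun l' hl' => by
    rw [mem_filter] at hl'
    simpa using flipSum_update S (!o) f hl'.1 (by simpa using hl'.2)
  have hcross : ∑ l ∈ S with u l = !o, ∑ l' ∈ S with u l' = o,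
      f (update (update u l o) l' !o) =
      ∑ l' ∈ S with u l' = o, ∑ l ∈ S with u l = !o, f (update (update u l' !o) l o) := by
    rw [sum_comm]
    refine sum_congr rfl fun l' hl' => sum_congr rfl fun l hl => ?_
    rw [mem_filter] at hl hl'
    have hne : l' ≠ l := by rintro rfl; cases o <;> simp_all
    rw [update_comm hne]
  rw [flipSum, sum_congr rfl hdown, flipSum, sum_congr rfl hup,
    sum_add_distrib, sum_add_distrib, hcross]
  simp only [sum_const, nsmul_eq_mul]
  ring

theorem eq_zero_of_flipSum_eq_zero [Fintype ι] {o : Bool} {f : (ι → Bool) → ℂ}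
    (hf : flipSum S o f = 0)
    (hminority : ∀ u, f u ≠ 0 → #{l ∈ S | u l = o} < #{l ∈ S | u l = !o}) : f = 0 := by
  set Df := flipSum S (!o) f
  set N : (ι → Bool) → ℝ := fun u => (#{l ∈ S | u l = !o} : ℝ) - #{l ∈ S | u l = o}
  have hsum : ∑ u, (Complex.normSq (Df u) + N u * Complex.normSq (f u)) = 0 := by
    apply Complex.ofReal_injective
    calc ((∑ u, (Complex.normSq (Df u) + N u * Complex.normSq (f u)) : ℝ) : ℂ)
        = ∑ u, (starRingEnd ℂ (Df u) * Df u + N u * (starRingEnd ℂ (f u) * f u)) := by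
          push_cast [Complex.normSq_eq_conj_mul_self]; rfl
      _ = ∑ u, starRingEnd ℂ (f u) * flipSum S (!o) (flipSum S o f) u := by
          have hadj := sum_conj_mul_flipSum S (!o) f Df
          rw [Bool.not_not] at hadj
          rw [sum_add_distrib, hadj, ← sum_add_distrib]
          refine sum_congr rfl fun u _ => ?_
          rw [flipSum_not_flipSum]
          simp only [N]
          push_cast
          ring
      _ = ∑ u, starRingEnd ℂ (flipSum S o f u) * flipSum S o f u :=
          (sum_conj_mul_flipSum S o f _).symm
      _ = 0 := by simp [hf]
  have hN : ∀ u, f u ≠ 0 → 0 < N u := fun u hu => by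
    simp only [N, sub_pos]
    exact_mod_cast hminority u hu
  have hterm_nonneg : ∀ u, 0 ≤ Complex.normSq (Df u) + N u * Complex.normSq (f u) := fun u => by
    by_cases hu : f u = 0
    · simp [hu, Complex.normSq_nonneg]
    · nlinarith [hN u hu, Complex.normSq_nonneg (f u), Complex.normSq_nonneg (Df u)]
  have hterm := (sum_eq_zero_iff_of_nonneg fun u _ => hterm_nonneg u).1 hsum
  funext u
  by_contra hu
  have := hterm u (mem_univ u)
  nlinarith [hN u hu, Complex.normSq_pos.2 hu, Complex.normSq_nonneg (Df u)]

end BoolCube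

namespace JohnsonScheme

open Function Module BoolCube

variable {n k : ℕ}

lemma JOp_apply (t : Fin n) (f : JFun n k) (x : JWord n k) :
    JOp n k t f x = ∑ l ∈ Iio t, f (permAct (Equiv.swap l t) x) := by
  simp [JOp, permOp, filter_gt_eq_Iio, Equiv.swap_inv]

lemma card_filter_comp_perm (u : Fin n → Bool) (σ : Equiv.Perm (Fin n)) :
    #{i | (u ∘ σ) i = true} = #{i | u i = true} :=
  card_equiv σ (by simp)

def extendByZero (f : JFun n k) (u : Fin n → Bool) : ℂ :=
  if h : #{i | u i = true} = k then f ⟨u, h⟩ else 0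

lemma extendByZero_coe (f : JFun n k) (w : JWord n k) : extendByZero f w.1 = f w := dif_pos w.2

lemma extendByZero_smul (a : ℂ) (f : JFun n k) (u : Fin n → Bool) :
    extendByZero (a • f) u = a * extendByZero f u := by
  unfold extendByZero; split_ifs <;> simp

lemma extendByZero_JOp (t : Fin n) (f : JFun n k) (u : Fin n → Bool) :
    extendByZero (JOp n k t f) u = ∑ l ∈ Iio t, extendByZero f (u ∘ Equiv.swap l t) := by
  by_cases hu : #{i | u i = true} = k
  · rw [extendByZero, dif_pos hu, JOp_apply]
    exact sum_congr rfl fun l _ =>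
      (extendByZero_coe f (permAct (Equiv.swap l t) ⟨u, hu⟩)).symm
  · have hu' : ∀ l, ¬ #{i | (u ∘ Equiv.swap l t) i = true} = k := fun l => by
      rwa [card_filter_comp_perm]
    simp only [extendByZero, dif_neg hu, dif_neg (hu' _), sum_const_zero]

lemma extendByZero_eq_zero_of_letter_ne {f : JFun n k} {t : Fin n} {o : Bool}
    (hsupp : ∀ w, f w ≠ 0 → w.1 t = o) {u : Fin n → Bool} (hu : u t ≠ o) :
    extendByZero f u = 0 := by
  unfold extendByZero
  split_ifs with h
  · exact by_contra fun hf => hu (hsupp _ hf)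
  · rfl

-- For `y t = !o` and `y l = o`, the word `y ∘ swap l t` is `y` with the letter at `l` flipped
-- and `o` written at `t`; hence the cube function overwrites the letter at `t` by `o`.
lemma flipSum_extendByZero_update {t : Fin n} {o : Bool} {f : JFun n k}
    (hsupp : ∀ w, f w ≠ 0 → w.1 t = o) (u : Fin n → Bool) :
    flipSum (Iio t) o (fun v => extendByZero f (update v t o)) u =
      extendByZero (JOp n k t f) (update u t !o) := by
  rw [extendByZero_JOp, flipSum, ← sum_filter_add_sum_filter_not (Iio t) (u · = o),
    sum_eq_zero (s := {l ∈ Iio t | ¬u l = o}), add_zero]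
  · refine sum_congr rfl fun l hl => ?_
    simp only [mem_filter, mem_Iio] at hl
    congr 1
    ext i
    simp only [comp_apply, Equiv.swap_apply_def, update_apply]
    split_ifs <;> simp_all [hl.1.ne]
  · intro l hl
    simp only [mem_filter, mem_Iio] at hl
    refine extendByZero_eq_zero_of_letter_ne hsupp ?_
    simpa [hl.1.ne] using hl.2

lemma exists_of_extendByZero_ne_zero {f : JFun n k} {u : Fin n → Bool}
    (hu : extendByZero f u ≠ 0) : ∃ w : JWord n k, w.1 = u ∧ f w ≠ 0 := by
  unfold extendByZero at hu
  split_ifs at hu with h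
  · exact ⟨⟨u, h⟩, rfl, hu⟩
  · exact absurd rfl hu

theorem eq_zero_of_JOp_eq_smul {t : Fin n} {o : Bool} {a : ℂ} {f : JFun n k}
    (heig : JOp n k t f = a • f) (hsupp : ∀ w, f w ≠ 0 → w.1 t = o)
    (hminority : ∀ w, f w ≠ 0 → #{l ∈ Iio t | w.1 l = o} < #{l ∈ Iio t | w.1 l = !o}) :
    f = 0 := by
  set g : (Fin n → Bool) → ℂ := fun v => extendByZero f (update v t o)
  have hg : flipSum (Iio t) o g = 0 := funext fun u => by
    rw [flipSum_extendByZero_update hsupp, heig, extendByZero_smul,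
      extendByZero_eq_zero_of_letter_ne hsupp (by simp), mul_zero, Pi.zero_apply]
  have hg0 : g = 0 := eq_zero_of_flipSum_eq_zero (Iio t) hg fun u hu => by
    obtain ⟨w, hwu, hw⟩ := exists_of_extendByZero_ne_zero hu
    have hagree : ∀ l ∈ Iio t, w.1 l = u l := fun l hl => by
      rw [hwu, update_of_ne (mem_Iio.1 hl).ne]
    have hcard : ∀ b, #{l ∈ Iio t | u l = b} = #{l ∈ Iio t | w.1 l = b} := fun b =>
      congrArg card (filter_congr fun l hl => by rw [hagree l hl])
    rw [hcard, hcard]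
    exact hminority w hw
  funext w
  rw [Pi.zero_apply]
  by_contra hw
  have hgw : extendByZero f (update w.1 t o) = 0 := congrFun hg0 w.1
  rw [← hsupp w hw, update_eq_self, extendByZero_coe] at hgw
  exact hw hgw

lemma card_filter_Iio_true_add_false (u : Fin n → Bool) (t : Fin n) :
    #{l ∈ Iio t | u l = true} + #{l ∈ Iio t | u l = false} = t := by
  simpa using card_filter_add_card_filter_not (s := Iio t) (u · = true)

lemma card_filter_Iic_add_card_filter_Ioi (u : Fin n → Bool) (t : Fin n) :
    #{l ∈ Iic t | u l = true} + #{l ∈ Ioi t | u l = true} = #{l | u l = true} := by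
  rw [← card_union_of_disjoint (disjoint_filter_filter
    (disjoint_left.2 fun _ hi hi' => not_lt.2 (mem_Iic.1 hi) (mem_Ioi.1 hi'))),
    ← filter_union]
  congr 1
  ext i
  simp [le_or_gt]

lemma card_filter_Iio_add_eq_of_agree {w w' : JWord n k} {t : Fin n}
    (h : ∀ i, t < i → w.1 i = w'.1 i) :
    #{l ∈ Iio t | w.1 l = true} + (w.1 t).toNat =
      #{l ∈ Iio t | w'.1 l = true} + (w'.1 t).toNat := by
  have hIic : ∀ v : JWord n k,
      #{l ∈ Iic t | v.1 l = true} = #{l ∈ Iio t | v.1 l = true} + (v.1 t).toNat := fun v => by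
    rw [← Iio_insert, filter_insert]
    cases hv : v.1 t <;> simp
  have hIoi : #{l ∈ Ioi t | w.1 l = true} = #{l ∈ Ioi t | w'.1 l = true} :=
    congrArg card (filter_congr fun i hi => by rw [h i (mem_Ioi.1 hi)])
  have hw := card_filter_Iic_add_card_filter_Ioi w.1 t
  have hw' := card_filter_Iic_add_card_filter_Ioi w'.1 t
  rw [hIic, w.2] at hw
  rw [hIic, w'.2] at hw'
  omega

theorem exists_minority_letter (t : Fin n) (c : Fin n → Bool) :
    ∃ o : Bool, ∀ w : JWord n k, (∀ i, t < i → w.1 i = c i) → w.1 t = o →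
      #{l ∈ Iio t | w.1 l = o} < #{l ∈ Iio t | w.1 l = !o} := by
  by_contra! h
  obtain ⟨w₁, hc₁, ht₁, hle₁⟩ := h true
  obtain ⟨w₀, hc₀, ht₀, hle₀⟩ := h false
  have hagree := card_filter_Iio_add_eq_of_agree (w := w₁) (w' := w₀) (t := t)
    fun i hi => (hc₁ i hi).trans (hc₀ i hi).symm
  have := card_filter_Iio_true_add_false w₁.1 t
  have := card_filter_Iio_true_add_false w₀.1 t
  simp only [ht₁, ht₀, Bool.not_true, Bool.not_false, Bool.toNat_true, Bool.toNat_false] at *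
  omega

lemma delta_eq_single (w : JWord n k) : delta w = Pi.single w 1 := by
  funext x
  simp [delta, Pi.single_apply]

lemma mem_suffixSpace_iff {q : ℕ} {c : Fin n → Bool} {f : JFun n k} :
    f ∈ suffixSpace n k q c ↔
      ∀ w, f w ≠ 0 → ∀ i : Fin n, q ≤ (i : ℕ) + 1 → w.1 i = c i := by
  constructor
  · intro hf
    induction hf using Submodule.span_induction with
    | mem g hg =>
      obtain ⟨w', hw', rfl⟩ := hg
      intro w hw
      obtain rfl : w = w' := by by_contra hne; simp [delta, hne] at hw
      exact hw'
    | zero => simp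
    | add g h _ _ hg hh =>
      intro w hw
      by_cases hgw : g w = 0
      · exact hh w (by simpa [hgw] using hw)
      · exact hg w hgw
    | smul a g _ hg =>
      intro w hw
      exact hg w (right_ne_zero_of_mul hw)
  · intro hf
    rw [← univ_sum_single f]
    refine Submodule.sum_mem _ fun w _ => ?_
    by_cases hw : f w = 0
    · simp [hw]
    · rw [← mul_one (f w), ← smul_eq_mul, Pi.single_smul', ← delta_eq_single]
      exact Submodule.smul_mem _ _ (Submodule.subset_span ⟨w, hf w hw, rfl⟩)

def letterProj (t : Fin n) (b : Bool) : JFun n k →ₗ[ℂ] JFun n k where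
  toFun f x := if x.1 t = b then f x else 0
  map_add' f g := by funext x; split_ifs <;> simp [*]
  map_smul' a f := by funext x; split_ifs <;> simp [*]

lemma letterProj_apply (t : Fin n) (b : Bool) (f : JFun n k) (x : JWord n k) :
    letterProj t b f x = if x.1 t = b then f x else 0 := rfl

lemma letterProj_false_add_letterProj_true (t : Fin n) (f : JFun n k) :
    letterProj t false f + letterProj t true f = f := by
  funext x
  cases hx : x.1 t <;> simp [letterProj_apply, hx]

lemma JOp_letterProj {s t : Fin n} (hst : s < t) (b : Bool) (f : JFun n k) :
    JOp n k s (letterProj t b f) = letterProj t b (JOp n k s f) := by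
  funext x
  have hfix : ∀ l ∈ Iio s, (permAct (Equiv.swap l s) x).1 t = x.1 t := fun l hl =>
    congrArg x.1 (Equiv.swap_apply_of_ne_of_ne ((mem_Iio.1 hl).trans hst).ne' hst.ne')
  simp only [JOp_apply, letterProj_apply]
  split_ifs with hx
  · exact sum_congr rfl fun l hl => by rw [if_pos ((hfix l hl).trans hx)]
  · exact sum_eq_zero fun l hl => by rw [if_neg (by rwa [hfix l hl])]

lemma letterProj_mem_suffixSpace {t : Fin n} {c : Fin n → Bool} {f : JFun n k}
    (hf : f ∈ suffixSpace n k (t + 2) c) (b : Bool) :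
    letterProj t b f ∈ suffixSpace n k (t + 1) (update c t b) := by
  rw [mem_suffixSpace_iff] at hf ⊢
  intro w hw i hi
  rw [letterProj_apply] at hw
  split_ifs at hw with hwt
  · rcases eq_or_ne i t with rfl | hne
    · rwa [update_self]
    · rw [update_of_ne hne]
      exact hf w hw i (by have := Fin.val_ne_of_ne hne; omega)
  · exact absurd rfl hw

def jmEigenspace (n k M : ℕ) (hM : M ≤ n) (a : Fin M → ℂ) : Submodule ℂ (JFun n k) :=
  ⨅ j : Fin M, Module.End.eigenspace (JOp n k ⟨j, lt_of_lt_of_le j.2 hM⟩) (a j)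

lemma letterProj_mem_jmEigenspace {M : ℕ} (hM : M < n) {a : Fin M → ℂ} {f : JFun n k}
    (hf : f ∈ jmEigenspace n k M hM.le a) (b : Bool) :
    letterProj ⟨M, hM⟩ b f ∈ jmEigenspace n k M hM.le a := by
  simp only [jmEigenspace, Submodule.mem_iInf, Module.End.mem_eigenspace_iff] at hf ⊢
  intro j
  rw [JOp_letterProj (show (⟨j, _⟩ : Fin n) < ⟨M, hM⟩ from j.2), hf j, map_smul]

lemma jmEigenspace_succ_le {M : ℕ} (hM : M + 1 ≤ n) (a : Fin (M + 1) → ℂ) :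
    jmEigenspace n k (M + 1) hM a ≤ jmEigenspace n k M (by omega) (fun j => a j.castSucc) :=
  le_iInf fun j => iInf_le _ j.castSucc

lemma JOp_eq_smul_of_mem_jmEigenspace {M : ℕ} (hM : M + 1 ≤ n) {a : Fin (M + 1) → ℂ}
    {f : JFun n k} (hf : f ∈ jmEigenspace n k (M + 1) hM a) :
    JOp n k ⟨M, hM⟩ f = a (Fin.last M) • f :=
  Module.End.mem_eigenspace_iff.1 ((Submodule.mem_iInf _).1 hf (Fin.last M))

theorem finrank_suffixSpace_one_le_one (c : Fin n → Bool) :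
    finrank ℂ (suffixSpace n k 1 c) ≤ 1 := by
  set v : JFun n k := fun x => if x.1 = c then 1 else 0
  have hle : suffixSpace n k 1 c ≤ Submodule.span ℂ {v} := by
    refine Submodule.span_le.2 ?_
    rintro _ ⟨w, hw, rfl⟩
    have hwc : w.1 = c := funext fun i => hw i (by omega)
    refine Submodule.subset_span (Set.mem_singleton_iff.2 (funext fun x => ?_))
    simp only [delta, v, ← hwc, Subtype.ext_iff]
  calc finrank ℂ (suffixSpace n k 1 c) ≤ finrank ℂ (Submodule.span ℂ {v}) :=
        Submodule.finrank_mono hle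
    _ ≤ 1 := by simpa using finrank_span_le_card ({v} : Set (JFun n k))

lemma letterProj_mem_suffixSpace_inf_jmEigenspace {q : ℕ} (hq : q < n) {c : Fin n → Bool}
    {a : Fin q → ℂ} {f : JFun n k}
    (hf : f ∈ suffixSpace n k (q + 2) c ⊓ jmEigenspace n k q hq.le a) (b : Bool) :
    letterProj ⟨q, hq⟩ b f ∈
      suffixSpace n k (q + 1) (update c ⟨q, hq⟩ b) ⊓ jmEigenspace n k q hq.le a := by
  rw [Submodule.mem_inf] at hf ⊢
  exact ⟨letterProj_mem_suffixSpace (t := ⟨q, hq⟩) hf.1 b,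
    letterProj_mem_jmEigenspace hq hf.2 b⟩

lemma letter_eq_of_letterProj_eq_zero {t : Fin n} {o : Bool} {f : JFun n k}
    (h : letterProj t (!o) f = 0) {w : JWord n k} (hw : f w ≠ 0) : w.1 t = o := by
  by_contra hwt
  have hfw := congrFun h w
  rw [letterProj_apply, if_pos (Bool.eq_not_iff.2 hwt)] at hfw
  exact hw hfw

theorem finrank_suffixSpace_inf_jmEigenspace_le_one (M : ℕ) (hM : M ≤ n) (c : Fin n → Bool)
    (a : Fin M → ℂ) :
    finrank ℂ ↥(suffixSpace n k (M + 1) c ⊓ jmEigenspace n k M hM a) ≤ 1 := by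
  induction M generalizing c with
  | zero => exact (Submodule.finrank_mono inf_le_left).trans (finrank_suffixSpace_one_le_one c)
  | succ q ih =>
    let t : Fin n := ⟨q, hM⟩
    obtain ⟨o, ho⟩ := exists_minority_letter (k := k) t c
    refine (Submodule.finrank_le_finrank_of_injOn (letterProj t !o)
      (fun f hf => letterProj_mem_suffixSpace_inf_jmEigenspace hM
        (inf_le_inf_left _ (jmEigenspace_succ_le hM a) hf) _)
      (fun f hf hf0 => ?_)).trans (ih (by omega) _ _)
    rw [Submodule.mem_inf] at hf
    have hsupp : ∀ w, f w ≠ 0 → w.1 t = o := fun _ hw => letter_eq_of_letterProj_eq_zero hf0 hw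
    refine eq_zero_of_JOp_eq_smul (JOp_eq_smul_of_mem_jmEigenspace hM hf.2) hsupp
      fun w hw => ho w (fun i hi => mem_suffixSpace_iff.1 hf.1 w hw i ?_) (hsupp w hw)
    have : q < (i : ℕ) := hi
    omega

theorem finrank_suffixSpace_inf_jmEigenspace_le_two {q : ℕ} (hq : q < n) (c : Fin n → Bool)
    (a : Fin q → ℂ) :
    finrank ℂ ↥(suffixSpace n k (q + 2) c ⊓ jmEigenspace n k q hq.le a) ≤ 2 := by
  let t : Fin n := ⟨q, hq⟩
  let W : Bool → Submodule ℂ (JFun n k) := fun b =>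
    suffixSpace n k (q + 1) (update c t b) ⊓ jmEigenspace n k q hq.le a
  have hle : suffixSpace n k (q + 2) c ⊓ jmEigenspace n k q hq.le a ≤ W false ⊔ W true :=
    fun f hf => letterProj_false_add_letterProj_true t f ▸ Submodule.add_mem_sup
      (letterProj_mem_suffixSpace_inf_jmEigenspace hq hf false)
      (letterProj_mem_suffixSpace_inf_jmEigenspace hq hf true)
  calc finrank ℂ ↥(suffixSpace n k (q + 2) c ⊓ jmEigenspace n k q hq.le a)
      ≤ finrank ℂ ↥(W false ⊔ W true) := Submodule.finrank_mono hle
    _ ≤ finrank ℂ (W false) + finrank ℂ (W true) :=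
        Submodule.finrank_add_le_finrank_add_finrank _ _
    _ ≤ 1 + 1 := add_le_add (finrank_suffixSpace_inf_jmEigenspace_le_one q hq.le _ a)
        (finrank_suffixSpace_inf_jmEigenspace_le_one q hq.le _ a)

end JohnsonScheme

/-- For `1 ≤ i ≤ n`, any standard Young tableau `λ_1 ↗ ⋯ ↗ λ_{i-1}` and any suffix word
`c_{i+1}…c_n`, the subspace `ℱ_{λ_1…λ_{i-1}}^{c_{i+1}…c_n}` of the function space of the
Johnson graph `J(n,k)` has dimension at most `2`. -/
theorem gt_suffix_subspace_dim_le_two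
    (n k i : ℕ) (hi : 1 ≤ i) (hin : i ≤ n) (c : Fin n → Bool)
    (μ : Fin ((i - 1) + 1) → YoungDiagram) :
    Module.finrank ℂ
      ↥(suffixSpace n k (i + 1) c ⊓ gtSpace n k (i - 1) (by omega) μ) ≤ 2 := by
  obtain ⟨q, rfl⟩ : ∃ q, i = q + 1 := ⟨i - 1, by omega⟩
  exact JohnsonScheme.finrank_suffixSpace_inf_jmEigenspace_le_two (by omega) c
    fun j => ((boxContent (μ j.castSucc) (μ j.succ) : ℤ) : ℂ)
end
end

section
/- In the setting of the function space ℱ on the Johnson graph J(n,k): for 1 ≤ i ≤ n−1, the subspace ℱ_{λ_1...λ_{i−1}}^{c_{i+2}...c_n} (prescribing a standard tableau of size i−1 and the suffix starting at position i+2) has dimension at most 4, and is invariant under both the transposition s_i = (i, i+1) and the Jucys-Murphy operator J_i acting on ℱ. -/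
open Finset

noncomputable section

/-!
Fix the letters after position `p` (counted from `1`). A function supported on the words with
letter `b` at `p` is a function on the Boolean cube of the first `p - 1` positions, and on the
words with letter `!b` at `p` the Jucys–Murphy operator `J_p` acts on it as an up/down operator
of the Boolean lattice. By the relation `DU - UD = (p - 1) - 2 · rank` and positivity, that
operator is injective below the middle rank. So on a joint eigenspace of `J_1, …, J_p` with the
letters after `p` fixed, restriction to the non-minority letter at `p` is injective and lands in
the corresponding space for `p - 1`; induction on `p` bounds the dimension of these spaces by `1`.
Splitting along the two free letters at positions `i` and `i + 1` gives the bound `4`. Both `s_i`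
and `J_i` commute with `J_1, …, J_{i-1}` and leave the suffix alone, which gives the invariance.
-/

open Function

section BoolCube

variable {ι R : Type*} [DecidableEq ι] (A : Finset ι)

def flipSum {M : Type*} [AddCommMonoid M] (b : Bool) (f : (ι → Bool) → M) (x : ι → Bool) : M :=
  ∑ l ∈ A with x l = b, f (update x l !b)

def flipAt (l : ι) : Equiv.Perm (ι → Bool) :=
  Involutive.toPerm (fun x => update x l !(x l)) fun x => by simp

@[simp]
theorem flipAt_apply (l : ι) (x : ι → Bool) : flipAt l x = update x l !(x l) := rfl

variable [CommRing R]

theorem sum_flipSum_mul [Fintype ι] (b : Bool) (f g : (ι → Bool) → R) :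
    ∑ x, flipSum A (!b) f x * g x = ∑ x, f x * flipSum A b g x := by
  simp only [flipSum, Finset.sum_mul, Finset.mul_sum, Finset.sum_filter]
  rw [Finset.sum_comm, Finset.sum_comm (s := univ)]
  refine Finset.sum_congr rfl fun l _ => Fintype.sum_equiv (flipAt l) _ _ fun x => ?_
  cases hx : x l <;> cases b <;> simp [hx] <;> rw [← hx, update_eq_self]

theorem flipSum_not_flipSum (b : Bool) (f : (ι → Bool) → R) (x : ι → Bool) :
    flipSum A (!b) (flipSum A b f) x = #{l ∈ A | x l = !b} * f x +
      ∑ l ∈ A with x l = !b, ∑ j ∈ A with x j = b, f (update (update x l b) j !b) := by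
  rw [flipSum, ← nsmul_eq_mul, ← Finset.sum_const, ← Finset.sum_add_distrib]
  refine Finset.sum_congr rfl fun l hl => ?_
  obtain ⟨hlA, hxl⟩ := Finset.mem_filter.mp hl
  have hfilter : {j ∈ A | update x l b j = b} = insert l {j ∈ A | x j = b} := by
    ext j; by_cases hj : j = l <;> simp [hj, hlA, update_of_ne]
  rw [flipSum, Bool.not_not, hfilter, Finset.sum_insert (by simp [hxl])]
  congr 1
  simp [← hxl]

/-- The relation `DU - UD = #A - 2 · rank` of the Boolean lattice, with `flipSum A b` and
`flipSum A !b` as `U` and `D`. -/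
theorem flipSum_not_flipSum_add (b : Bool) (f : (ι → Bool) → R) (x : ι → Bool) :
    flipSum A (!b) (flipSum A b f) x + 2 * #{l ∈ A | x l = b} * f x =
      flipSum A b (flipSum A (!b) f) x + #A * f x := by
  have hcard : #{l ∈ A | x l = !b} + #{l ∈ A | x l = b} = #A := by
    have hnot : {l ∈ A | x l = !b} = {l ∈ A | ¬x l = b} :=
      Finset.filter_congr fun l _ => by cases x l <;> cases b <;> simp
    rw [hnot, add_comm, Finset.card_filter_add_card_filter_not]
  have hcross : ∑ l ∈ A with x l = b, ∑ j ∈ A with x j = !b, f (update (update x l !b) j b) =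
      ∑ l ∈ A with x l = !b, ∑ j ∈ A with x j = b, f (update (update x l b) j !b) := by
    rw [Finset.sum_comm' (t' := {j ∈ A | x j = !b}) (s' := fun _ => {l ∈ A | x l = b})
      (by simp only [Finset.mem_filter]; tauto)]
    refine Finset.sum_congr rfl fun l hl => Finset.sum_congr rfl fun j hj => ?_
    simp only [Finset.mem_filter] at hl hj
    rw [update_comm (fun h => by simp_all)]
  have hswap := flipSum_not_flipSum A (!b) f x
  rw [Bool.not_not] at hswap
  rw [flipSum_not_flipSum, hswap, hcross, ← hcard]
  push_cast
  ring

theorem sum_flipSum_sq [Fintype ι] (b : Bool) (f : (ι → Bool) → R) :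
    ∑ x, flipSum A b f x ^ 2 = ∑ x, flipSum A (!b) f x ^ 2 +
      ∑ x, ((#A : R) - 2 * #{l ∈ A | x l = b}) * f x ^ 2 := by
  have hadj := sum_flipSum_mul A (!b) f (flipSum A b f)
  rw [Bool.not_not] at hadj
  simp only [sq, hadj, sum_flipSum_mul A b f (flipSum A (!b) f), ← Finset.sum_add_distrib]
  refine Finset.sum_congr rfl fun x _ => ?_
  linear_combination f x * flipSum_not_flipSum_add A b f x

theorem eq_zero_of_flipSum_eq_zero [Fintype ι] [LinearOrder R] [IsStrictOrderedRing R]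
    (b : Bool) (f : (ι → Bool) → R) (hf : ∀ x, f x ≠ 0 → 2 * #{l ∈ A | x l = b} < #A)
    (h : flipSum A b f = 0) : f = 0 := by
  have hpos : ∀ x, f x ≠ 0 → 0 < ((#A : R) - 2 * #{l ∈ A | x l = b}) * f x ^ 2 := fun x hx =>
    mul_pos (sub_pos.mpr (by exact_mod_cast hf x hx)) (pow_two_pos_of_ne_zero hx)
  have hnonneg : ∀ x, 0 ≤ flipSum A (!b) f x ^ 2 + ((#A : R) - 2 * #{l ∈ A | x l = b}) * f x ^ 2 :=
    fun x => add_nonneg (sq_nonneg _) <| by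
      by_cases hx : f x = 0
      · simp [hx]
      · exact (hpos x hx).le
  have hsum := sum_flipSum_sq A b f
  simp only [h, Pi.zero_apply, zero_pow two_ne_zero, Finset.sum_const_zero,
    ← Finset.sum_add_distrib] at hsum
  funext x
  by_contra hx
  have hx0 := (Finset.sum_eq_zero_iff_of_nonneg fun x _ => hnonneg x).mp hsum.symm x (mem_univ x)
  linarith [sq_nonneg (flipSum A (!b) f x), hpos x hx]

/-- On `{x | x pos = !b}`, the swap sum is `flipSum A b` of `x ↦ G (update x pos b)`. -/
theorem eq_zero_of_sum_comp_swap_eq_zero [Fintype ι] [LinearOrder R] [IsStrictOrderedRing R]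
    {pos : ι} (hpos : pos ∉ A) (b : Bool) (G : (ι → Bool) → R)
    (hG : ∀ x, G x ≠ 0 → x pos = b ∧ 2 * #{l ∈ A | x l = b} < #A)
    (hswap : ∀ y, y pos = !b → ∑ l ∈ A, G (y ∘ Equiv.swap l pos) = 0) : G = 0 := by
  have hne : ∀ l ∈ A, l ≠ pos := fun l hl h => hpos (h ▸ hl)
  obtain ⟨g, hgdef⟩ : ∃ g : (ι → Bool) → R,
      ∀ x, g x = if x pos = b then 0 else G (update x pos b) := ⟨_, fun _ => rfl⟩
  have hcount (x : ι → Bool) (c : Bool) :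
      #{l ∈ A | update x pos c l = b} = #{l ∈ A | x l = b} := by
    congr 1
    exact Finset.filter_congr fun l hl => by rw [update_of_ne (hne l hl)]
  have hflip : flipSum A b g = 0 := by
    funext y
    by_cases hy : y pos = b
    · refine Finset.sum_eq_zero fun l hl => ?_
      rw [hgdef, if_pos (by rw [update_of_ne (hne l (Finset.mem_filter.mp hl).1).symm, hy])]
    have hy' : y pos = !b := by cases b <;> simpa using hy
    calc flipSum A b g y = ∑ l ∈ A with y l = b, G (y ∘ Equiv.swap l pos) := by
          refine Finset.sum_congr rfl fun l hl => ?_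
          obtain ⟨hlA, hyl⟩ := Finset.mem_filter.mp hl
          rw [hgdef, if_neg (by rwa [update_of_ne (hne l hlA).symm]), Equiv.comp_swap_eq_update,
            hyl, hy', update_comm (hne l hlA)]
      _ = ∑ l ∈ A, G (y ∘ Equiv.swap l pos) :=
          Finset.sum_filter_of_ne fun l _ h => by simpa using (hG _ h).1
      _ = 0 := hswap y hy'
  have hg : g = 0 := by
    refine eq_zero_of_flipSum_eq_zero A b g (fun x hx => ?_) hflip
    rw [hgdef] at hx
    split_ifs at hx with hxb
    · exact absurd rfl hx
    · rw [← hcount x b]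
      exact (hG _ hx).2
  funext x
  by_cases hx : x pos = b
  · have := congrFun hg (update x pos !b)
    simpa [hgdef, ← hx] using this
  · exact not_imp_comm.mp (fun h => (hG x h).1) hx

end BoolCube

section JohnsonFunctions

variable {n k : ℕ}

theorem permOp_apply (σ : Equiv.Perm (Fin n)) (f : JFun n k) (w : JWord n k) :
    permOp σ f w = f (permAct σ⁻¹ w) := rfl

theorem permAct_val (σ : Equiv.Perm (Fin n)) (w : JWord n k) : (permAct σ w).1 = w.1 ∘ ⇑σ⁻¹ :=
  rfl

theorem permOp_mul (σ τ : Equiv.Perm (Fin n)) :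
    (permOp σ * permOp τ : Module.End ℂ (JFun n k)) = permOp (σ * τ) :=
  LinearMap.ext fun _ => funext fun _ => rfl

theorem JOp_eq_sum_Iio (t : Fin n) :
    JOp n k t = ∑ l ∈ Iio t, permOp (Equiv.swap l t) := by
  rw [JOp, filter_gt_eq_Iio]

theorem swap_apply_lt_iff {a b t : Fin n} (h : a < t ↔ b < t) (x : Fin n) :
    Equiv.swap a b x < t ↔ x < t := by
  rcases eq_or_ne x a with rfl | hxa
  · rw [Equiv.swap_apply_left, h]
  rcases eq_or_ne x b with rfl | hxb
  · rw [Equiv.swap_apply_right, h]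
  · rw [Equiv.swap_apply_of_ne_of_ne hxa hxb]

theorem commute_permOp_JOp {σ : Equiv.Perm (Fin n)} {t : Fin n} (hσt : σ t = t)
    (hσ : ∀ l, σ l < t ↔ l < t) : Commute (permOp σ) (JOp n k t) := by
  have hconj (l : Fin n) : σ * Equiv.swap l t = Equiv.swap (σ l) t * σ := by
    rw [← hσt, Equiv.swap_apply_apply, hσt, inv_mul_cancel_right]
  simp only [Commute, SemiconjBy, JOp_eq_sum_Iio, Finset.mul_sum, Finset.sum_mul, permOp_mul,
    hconj]
  exact Finset.sum_equiv σ (fun l => by simp [hσ]) fun _ _ => rfl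

theorem commute_JOp_JOp {t s : Fin n} (hts : t < s) : Commute (JOp n k t) (JOp n k s) := by
  rw [JOp_eq_sum_Iio t]
  refine Commute.sum_left _ _ _ fun l hl => commute_permOp_JOp ?_ (swap_apply_lt_iff ?_)
  · exact Equiv.swap_apply_of_ne_of_ne (mem_Iio.mp hl |>.trans hts).ne' hts.ne'
  · exact iff_of_true ((mem_Iio.mp hl).trans hts) hts

def restrictLetter (pos : Fin n) (b : Bool) : Module.End ℂ (JFun n k) where
  toFun f w := if w.1 pos = b then f w else 0
  map_add' f g := funext fun w => by by_cases h : w.1 pos = b <;> simp [h]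
  map_smul' r f := funext fun w => by by_cases h : w.1 pos = b <;> simp [h]

theorem restrictLetter_apply (pos : Fin n) (b : Bool) (f : JFun n k) (w : JWord n k) :
    restrictLetter pos b f w = if w.1 pos = b then f w else 0 := rfl

theorem restrictLetter_false_add_true (pos : Fin n) (f : JFun n k) :
    restrictLetter pos false f + restrictLetter pos true f = f :=
  funext fun w => by cases h : w.1 pos <;> simp [restrictLetter_apply, h]

theorem commute_restrictLetter_permOp {pos : Fin n} {σ : Equiv.Perm (Fin n)} (hσ : σ pos = pos)
    (b : Bool) : Commute (restrictLetter pos b) (permOp σ : Module.End ℂ (JFun n k)) :=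
  LinearMap.ext fun f => funext fun w => by
    simp [restrictLetter_apply, permOp_apply, permAct_val, hσ]

theorem commute_restrictLetter_JOp {pos t : Fin n} (ht : t < pos) (b : Bool) :
    Commute (restrictLetter pos b) (JOp n k t) := by
  rw [JOp_eq_sum_Iio]
  exact Commute.sum_right _ _ _ fun l hl => commute_restrictLetter_permOp
    (Equiv.swap_apply_of_ne_of_ne ((mem_Iio.mp hl).trans ht).ne' ht.ne') b

theorem mem_suffixSpace_iff {q : ℕ} {c : Fin n → Bool} {f : JFun n k} :
    f ∈ suffixSpace n k q c ↔ ∀ w, f w ≠ 0 → ∀ i : Fin n, q ≤ i + 1 → w.1 i = c i := by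
  constructor
  · intro hf
    induction hf using Submodule.span_induction with
    | mem g hg =>
      obtain ⟨v, hv, rfl⟩ := hg
      intro w hw
      obtain rfl : w = v := by simpa [delta] using hw
      exact hv
    | zero => simp
    | add g h _ _ hg hh =>
      intro w hw
      by_cases hgw : g w = 0
      · exact hh w (by simpa [hgw] using hw)
      · exact hg w hgw
    | smul a g _ hg => exact fun w hw => hg w (right_ne_zero_of_mul hw)
  · intro hf
    have hsum : f = ∑ w, f w • delta w := funext fun x => by simp [delta]
    rw [hsum]
    refine Submodule.sum_mem _ fun w _ => ?_
    by_cases hw : f w = 0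
    · simp [hw]
    · exact Submodule.smul_mem _ _ (Submodule.subset_span ⟨w, hf w hw, rfl⟩)

theorem permOp_mem_suffixSpace {q : ℕ} {c : Fin n → Bool} {σ : Equiv.Perm (Fin n)}
    (hσ : ∀ i : Fin n, q ≤ i + 1 → σ i = i) {f : JFun n k} (hf : f ∈ suffixSpace n k q c) :
    permOp σ f ∈ suffixSpace n k q c := by
  rw [mem_suffixSpace_iff] at hf ⊢
  intro w hw i hi
  simpa [permAct_val, hσ i hi] using hf _ hw i hi

theorem JOp_mem_suffixSpace {q : ℕ} {c : Fin n → Bool} {t : Fin n} (ht : (t : ℕ) + 1 < q)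
    {f : JFun n k} (hf : f ∈ suffixSpace n k q c) : JOp n k t f ∈ suffixSpace n k q c := by
  rw [JOp_eq_sum_Iio, LinearMap.sum_apply]
  refine Submodule.sum_mem _ fun l hl => permOp_mem_suffixSpace (fun i hi => ?_) hf
  have hl : (l : ℕ) < t := Fin.lt_def.mp (mem_Iio.mp hl)
  exact Equiv.swap_apply_of_ne_of_ne (Fin.ne_of_val_ne (by omega)) (Fin.ne_of_val_ne (by omega))

theorem restrictLetter_mem_suffixSpace {pos : Fin n} {c : Fin n → Bool} (b : Bool)
    {f : JFun n k} (hf : f ∈ suffixSpace n k (pos + 2) c) :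
    restrictLetter pos b f ∈ suffixSpace n k (pos + 1) (update c pos b) := by
  rw [mem_suffixSpace_iff] at hf ⊢
  intro w hw i hi
  rw [restrictLetter_apply] at hw
  split_ifs at hw with hwb
  swap
  · exact absurd rfl hw
  rcases eq_or_ne i pos with rfl | hip
  · rw [update_self, hwb]
  · rw [update_of_ne hip]
    exact hf w hw i (by have := Fin.val_ne_of_ne hip; omega)

def jointEigenspace (n k p : ℕ) (hp : p ≤ n) (α : Fin p → ℂ) : Submodule ℂ (JFun n k) :=
  ⨅ j : Fin p, Module.End.eigenspace (JOp n k ⟨j, j.2.trans_le hp⟩) (α j)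

theorem mem_jointEigenspace_iff {p : ℕ} {hp : p ≤ n} {α : Fin p → ℂ} {v : JFun n k} :
    v ∈ jointEigenspace n k p hp α ↔ ∀ j : Fin p, JOp n k ⟨j, j.2.trans_le hp⟩ v = α j • v := by
  simp [jointEigenspace]

theorem jointEigenspace_succ_le {p : ℕ} (hp : p + 1 ≤ n) (α : Fin (p + 1) → ℂ) :
    jointEigenspace n k (p + 1) hp α ≤ jointEigenspace n k p (by omega) (α ∘ Fin.castSucc) :=
  fun _ hv => mem_jointEigenspace_iff.mpr fun j => mem_jointEigenspace_iff.mp hv j.castSucc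

theorem map_mem_jointEigenspace {p : ℕ} {hp : p ≤ n} {α : Fin p → ℂ} {T : Module.End ℂ (JFun n k)}
    (hT : ∀ j : Fin p, Commute T (JOp n k ⟨j, j.2.trans_le hp⟩)) {v : JFun n k}
    (hv : v ∈ jointEigenspace n k p hp α) : T v ∈ jointEigenspace n k p hp α := by
  rw [mem_jointEigenspace_iff] at hv ⊢
  intro j
  rw [← Module.End.mul_apply, ← (hT j).eq, Module.End.mul_apply, hv j, map_smul]

theorem extend_val_comp_perm (σ : Equiv.Perm (Fin n)) (u : JFun n k) (x : Fin n → Bool) :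
    extend Subtype.val u 0 (x ∘ σ) = extend Subtype.val (permOp σ u) 0 x := by
  by_cases hx : ∃ w : JWord n k, w.1 = x
  · obtain ⟨w, rfl⟩ := hx
    rw [show w.1 ∘ σ = (permAct σ⁻¹ w).1 by rw [permAct_val, inv_inv],
      Subtype.val_injective.extend_apply, Subtype.val_injective.extend_apply, permOp_apply]
  · have hxσ : ¬∃ w : JWord n k, w.1 = x ∘ σ := fun ⟨w, hw⟩ =>
      hx ⟨permAct σ w, by rw [permAct_val, hw]; ext; simp⟩
    rw [extend_apply' _ _ _ hx, extend_apply' _ _ _ hxσ]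
    rfl

/-- Extended by zero to all of `Fin n → Bool`, `J_pos u` becomes the swap sum of
`eq_zero_of_sum_comp_swap_eq_zero`. -/
theorem eq_zero_of_JOp_apply_eq_zero {pos : Fin n} {b : Bool} {u : JFun n k}
    (hu : ∀ w, u w ≠ 0 → w.1 pos = b ∧ 2 * #{l ∈ Iio pos | w.1 l = b} < pos)
    (hJ : ∀ w, w.1 pos = !b → JOp n k pos u w = 0) : u = 0 := by
  set E := Function.ExtendByZero.linearMap ℂ (Subtype.val : JWord n k → Fin n → Bool)
  have hE (f : JFun n k) (w : JWord n k) : E f w.1 = f w := Subtype.val_injective.extend_apply _ _ _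
  have hsupp (x : Fin n → Bool) (hx : E u x ≠ 0) :
      x pos = b ∧ 2 * #{l ∈ Iio pos | x l = b} < #(Iio pos) := by
    obtain ⟨w, rfl⟩ : ∃ w : JWord n k, w.1 = x := by
      by_contra h
      exact hx (extend_apply' _ _ _ h)
    rw [Fin.card_Iio]
    exact hu w (by rwa [← hE u w])
  have hswap (y : Fin n → Bool) (hy : y pos = !b) :
      ∑ l ∈ Iio pos, E u (y ∘ Equiv.swap l pos) = 0 := by
    have hsum : ∑ l ∈ Iio pos, E u (y ∘ Equiv.swap l pos) = E (JOp n k pos u) y := by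
      rw [JOp_eq_sum_Iio, LinearMap.sum_apply, map_sum, Finset.sum_apply]
      exact Finset.sum_congr rfl fun l _ => extend_val_comp_perm _ u y
    rw [hsum]
    by_cases hy' : ∃ w : JWord n k, w.1 = y
    · obtain ⟨w, rfl⟩ := hy'
      rw [hE, hJ w hy]
    · exact extend_apply' _ _ _ hy'
  have hcomp (φ : ℂ →ₗ[ℝ] ℝ) : (fun x => φ (E u x)) = 0 :=
    eq_zero_of_sum_comp_swap_eq_zero (Iio pos) (by simp) b _
      (fun x hx => hsupp x fun h => hx (by rw [h, map_zero]))
      (fun y hy => by rw [← map_sum, hswap y hy, map_zero])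
  funext w
  rw [Pi.zero_apply, ← hE u w]
  exact Complex.ext (congrFun (hcomp Complex.reLm) w.1) (congrFun (hcomp Complex.imLm) w.1)

theorem card_Iio_filter_eq_add_one {x y : Fin n → Bool} {pos : Fin n} (hx : x pos = true)
    (hy : y pos = false) (hxy : ∀ j, pos < j → x j = y j)
    (hcard : #{i | x i = true} = #{i | y i = true}) :
    #{l ∈ Iio pos | y l = true} = #{l ∈ Iio pos | x l = true} + 1 := by
  have hsplit (z : Fin n → Bool) :
      #{i | z i = true} = #{l ∈ Iio pos | z l = true} + #{i | z i = true ∧ pos ≤ i} := by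
    rw [← Finset.card_filter_add_card_filter_not (s := {i | z i = true}) (p := (· < pos))]
    congr 2 <;> ext i <;> simp [and_comm]
  have htail : univ.filter (fun i => x i = true ∧ pos ≤ i) =
      insert pos (univ.filter fun i => y i = true ∧ pos ≤ i) := by
    ext i
    rcases lt_trichotomy pos i with h | rfl | h
    · simp [h.le, h.ne', hxy i h]
    · simp [hx]
    · simp [h.not_ge, h.ne]
  rw [hsplit x, hsplit y, htail, Finset.card_insert_of_notMem (by simp [hy])] at hcard
  omega

/-- With the suffix and the weight fixed, replacing the letter `true` at `pos` by `false` adds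
one `true` before `pos`; so `true` or `false` is a strict minority before `pos` in all words
carrying it at `pos`. -/
theorem exists_minority_letter (pos : Fin n) (c : Fin n → Bool) :
    ∃ b : Bool, ∀ w : JWord n k, w.1 pos = b → (∀ j, pos < j → w.1 j = c j) →
      2 * #{l ∈ Iio pos | w.1 l = b} < pos := by
  by_contra! h
  obtain ⟨w₁, hw₁, hc₁, h₁⟩ := h true
  obtain ⟨w₀, hw₀, hc₀, h₀⟩ := h false
  have hshift := card_Iio_filter_eq_add_one hw₁ hw₀
    (fun j hj => (hc₁ j hj).trans (hc₀ j hj).symm) (w₁.2.trans w₀.2.symm)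
  have hpart := Finset.card_filter_add_card_filter_not (s := Iio pos) (p := fun l => w₀.1 l = true)
  simp only [Bool.not_eq_true, Fin.card_Iio] at hpart
  omega

theorem finrank_suffixSpace_one_le_one (c : Fin n → Bool) :
    Module.finrank ℂ (suffixSpace n k 1 c) ≤ 1 := by
  have hle : suffixSpace n k 1 c ≤
      Submodule.span ℂ (Set.range fun w : {w : JWord n k // w.1 = c} => delta w.1) := by
    refine Submodule.span_mono ?_
    rintro _ ⟨w, hw, rfl⟩
    exact ⟨⟨w, funext fun i => hw i (by omega)⟩, rfl⟩
  refine (Submodule.finrank_mono hle).trans ((finrank_range_le_card _).trans ?_)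
  exact Fintype.card_le_one_iff_subsingleton.mpr
    ⟨fun w w' => Subtype.ext (Subtype.ext (w.2.trans w'.2.symm))⟩

theorem finrank_suffixSpace_inf_jointEigenspace_le_one (p : ℕ) (hp : p ≤ n) (α : Fin p → ℂ)
    (c : Fin n → Bool) :
    Module.finrank ℂ ↥(suffixSpace n k (p + 1) c ⊓ jointEigenspace n k p hp α) ≤ 1 := by
  induction p generalizing c with
  | zero => exact (Submodule.finrank_mono inf_le_left).trans (finrank_suffixSpace_one_le_one c)
  | succ p ih =>
    set pos : Fin n := ⟨p, hp⟩
    obtain ⟨b, hb⟩ := exists_minority_letter pos c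
    have hmaps : ∀ v ∈ suffixSpace n k (p + 1 + 1) c ⊓ jointEigenspace n k (p + 1) hp α,
        restrictLetter pos (!b) v ∈ suffixSpace n k (p + 1) (update c pos !b) ⊓
          jointEigenspace n k p (by omega) (α ∘ Fin.castSucc) := fun v hv =>
      ⟨restrictLetter_mem_suffixSpace (pos := pos) _ hv.1, map_mem_jointEigenspace
        (fun j => commute_restrictLetter_JOp (Fin.lt_def.mpr j.2) _)
        (jointEigenspace_succ_le hp α hv.2)⟩
    have hinj : ∀ v ∈ suffixSpace n k (p + 1 + 1) c ⊓ jointEigenspace n k (p + 1) hp α,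
        restrictLetter pos (!b) v = 0 → v = 0 := by
      intro v hv hv0
      have hvanish (w : JWord n k) (hw : w.1 pos = !b) : v w = 0 := by
        simpa [restrictLetter_apply, hw] using congrFun hv0 w
      refine eq_zero_of_JOp_apply_eq_zero (pos := pos) (b := b) (fun w hw => ?_) fun w hw => ?_
      · have hwb : w.1 pos = b := by
          by_contra h
          exact hw (hvanish w (Bool.eq_not_iff.mpr h))
        refine ⟨hwb, hb w hwb fun j hj => mem_suffixSpace_iff.mp hv.1 w hw j ?_⟩
        have := Fin.lt_def.mp hj
        simp only [pos] at this
        omega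
      · have hJ := mem_jointEigenspace_iff.mp hv.2 (Fin.last p)
        simp only [Fin.val_last] at hJ
        rw [hJ, Pi.smul_apply, hvanish w hw, smul_zero]
    calc Module.finrank ℂ ↥(suffixSpace n k (p + 1 + 1) c ⊓ jointEigenspace n k (p + 1) hp α)
        ≤ Module.finrank ℂ ↥(suffixSpace n k (p + 1) (update c pos !b) ⊓
          jointEigenspace n k p (by omega) (α ∘ Fin.castSucc)) :=
          LinearMap.finrank_le_finrank_of_injective (f := LinearMap.restrict _ hmaps)
            ((injective_iff_map_eq_zero _).mpr fun v hv =>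
              Subtype.ext (hinj v.1 v.2 (congrArg Subtype.val hv)))
      _ ≤ 1 := ih _ _ _

theorem finrank_suffixSpace_inf_le_add {pos : Fin n} {c : Fin n → Bool}
    {R : Submodule ℂ (JFun n k)} (hR : ∀ b, ∀ v ∈ R, restrictLetter pos b v ∈ R) :
    Module.finrank ℂ ↥(suffixSpace n k (pos + 2) c ⊓ R) ≤
      Module.finrank ℂ ↥(suffixSpace n k (pos + 1) (update c pos false) ⊓ R) +
        Module.finrank ℂ ↥(suffixSpace n k (pos + 1) (update c pos true) ⊓ R) := by
  refine (Submodule.finrank_mono fun v hv => ?_).trans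
    (Submodule.finrank_add_le_finrank_add_finrank _ _)
  rw [← restrictLetter_false_add_true pos v]
  exact Submodule.add_mem_sup ⟨restrictLetter_mem_suffixSpace _ hv.1, hR _ v hv.2⟩
    ⟨restrictLetter_mem_suffixSpace _ hv.1, hR _ v hv.2⟩

theorem finrank_suffixSpace_inf_jointEigenspace_le_two_pow (p r : ℕ) (hpr : p + r ≤ n)
    (α : Fin p → ℂ) (c : Fin n → Bool) :
    Module.finrank ℂ ↥(suffixSpace n k (p + 1 + r) c ⊓ jointEigenspace n k p (by omega) α) ≤
      2 ^ r := by
  induction r generalizing c with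
  | zero => exact finrank_suffixSpace_inf_jointEigenspace_le_one p _ α c
  | succ r ih =>
    set pos : Fin n := ⟨p + r, by omega⟩
    have hpos : (pos : ℕ) + 1 = p + 1 + r := by simp only [pos]; omega
    have hR (b : Bool) (v : JFun n k) (hv : v ∈ jointEigenspace n k p (by omega) α) :
        restrictLetter pos b v ∈ jointEigenspace n k p (by omega) α :=
      map_mem_jointEigenspace (fun j => commute_restrictLetter_JOp
        (Fin.lt_def.mpr (by simp only [pos]; omega)) b) hv
    rw [show p + 1 + (r + 1) = (pos : ℕ) + 2 by omega]
    refine (finrank_suffixSpace_inf_le_add hR).trans ?_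
    rw [hpos, pow_succ, mul_two]
    exact add_le_add (ih (by omega) _) (ih (by omega) _)

theorem gtSpace_eq_jointEigenspace (p : ℕ) (hp : p ≤ n) (μ : Fin (p + 1) → YoungDiagram) :
    gtSpace n k p hp μ =
      jointEigenspace n k p hp fun j => ((boxContent (μ j.castSucc) (μ j.succ) : ℤ) : ℂ) :=
  rfl

end JohnsonFunctions

/-- For `1 ≤ i ≤ n - 1`, any standard Young tableau `λ_1 ↗ ⋯ ↗ λ_{i-1}` and any suffix
word `c_{i+2}…c_n`, the subspace `ℱ_{λ_1…λ_{i-1}}^{c_{i+2}…c_n}` has dimension at most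
`4` and is invariant under both the transposition `s_i = (i, i+1)` and the Jucys-Murphy
operator `J_i` acting on `ℱ`. -/
theorem gt_suffix_subspace_dim_le_four_and_invariant
    (n k i : ℕ) (hi : 1 ≤ i) (hin : i ≤ n - 1) (c : Fin n → Bool)
    (μ : Fin ((i - 1) + 1) → YoungDiagram) :
    Module.finrank ℂ
        ↥(suffixSpace n k (i + 2) c ⊓ gtSpace n k (i - 1) (by omega) μ) ≤ 4 ∧
    (∀ v ∈ suffixSpace n k (i + 2) c ⊓ gtSpace n k (i - 1) (by omega) μ,
      permOp (Equiv.swap ⟨i - 1, by omega⟩ ⟨i, by omega⟩) v ∈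
        suffixSpace n k (i + 2) c ⊓ gtSpace n k (i - 1) (by omega) μ) ∧
    (∀ v ∈ suffixSpace n k (i + 2) c ⊓ gtSpace n k (i - 1) (by omega) μ,
      JOp n k ⟨i - 1, by omega⟩ v ∈
        suffixSpace n k (i + 2) c ⊓ gtSpace n k (i - 1) (by omega) μ) := by
  simp only [gtSpace_eq_jointEigenspace]
  refine ⟨?_, fun v hv => ⟨?_, ?_⟩, fun v hv => ⟨?_, ?_⟩⟩
  · rw [show i + 2 = i - 1 + 1 + 2 by omega]
    exact finrank_suffixSpace_inf_jointEigenspace_le_two_pow (i - 1) 2 (by omega) _ c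
  · refine permOp_mem_suffixSpace (fun j hj => ?_) hv.1
    exact Equiv.swap_apply_of_ne_of_ne (Fin.ne_of_val_ne (by dsimp only; omega))
      (Fin.ne_of_val_ne (by dsimp only; omega))
  · refine map_mem_jointEigenspace (fun j => commute_permOp_JOp ?_ (swap_apply_lt_iff ?_)) hv.2
    · have := j.2
      exact Equiv.swap_apply_of_ne_of_ne (Fin.ne_of_val_ne (by dsimp only; omega))
        (Fin.ne_of_val_ne (by dsimp only; omega))
    · have := j.2
      exact iff_of_false (by rw [Fin.lt_def]; dsimp only; omega)
        (by rw [Fin.lt_def]; dsimp only; omega)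
  · exact JOp_mem_suffixSpace (by dsimp only; omega) hv.1
  · exact map_mem_jointEigenspace
      (fun j => (commute_JOp_JOp (Fin.lt_def.mpr (by have := j.2; dsimp only; omega))).symm) hv.2
end
end
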